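/- The matrix B(2) equals 2Γ − I, its determinant is 1 + 4a − 4b (in particular B(2) is injective as a ℤ-linear map), the greatest common divisors of its entries, of its 2×2 minors and of its 3×3 minors are all equal to 1, and coker B(2) is isomorphic as an abelian group to ℤ_{1+4a−4b}. -/

import Mathlib

open Matrix

/-- The combinatorial Seifert-type matrix of a 2-bridge knot of genus two with
Alexander polynomial `A(z) = a + (b-a)z + (1-2b)z² + (b-a)z³ + a z⁴`. -/
def Gamma (a b : ℤ) : Matrix (Fin 4) (Fin 4) ℤ :=
  !![a, -1 + b, -b, -a;
     a, b, -b, -a;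
     a, b, 1 - b, -a;
     a, b, 1 - b, 1 - a]

/-- `B(n) = Γⁿ − (Γ − I)ⁿ`. -/
def B (a b : ℤ) (n : ℕ) : Matrix (Fin 4) (Fin 4) ℤ :=
  Gamma a b ^ n - (Gamma a b - 1) ^ n

/-! ### Auxiliary material: an explicit Smith normal form of `B a b 2` -/

/-- `B a b 2` written as an explicit matrix. -/
def Mex (a b : ℤ) : Matrix (Fin 4) (Fin 4) ℤ :=
  !![2*a-1, 2*b-2, -2*b, -2*a;
     2*a, 2*b-1, -2*b, -2*a;
     2*a, 2*b, 1-2*b, -2*a;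
     2*a, 2*b, 2-2*b, 1-2*a]

/-- Left transformation matrix of a Smith normal form of `Mex`. -/
def Pm (a b : ℤ) : Matrix (Fin 4) (Fin 4) ℤ :=
  !![-1, 1, 0, 0; 0, -1, 1, 0; 0, 0, -1, 1; -2*a, 4*a-2*b, 6*b-4*a-2, 2*a-4*b+1]

/-- The inverse of `Pm`. -/
def Pinv (a b : ℤ) : Matrix (Fin 4) (Fin 4) ℤ :=
  !![2*a-1, 2*b-2*a-1, 2*a-4*b+1, -1; 2*a, 2*b-2*a-1, 2*a-4*b+1, -1;
     2*a, 2*b-2*a, 2*a-4*b+1, -1; 2*a, 2*b-2*a, 2*a-4*b+2, -1]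

/-- Right transformation matrix of a Smith normal form of `Mex`. -/
def Qm : Matrix (Fin 4) (Fin 4) ℤ :=
  !![1, -1, 1, -1; 0, 1, -1, 1; 0, 0, 1, -1; 0, 0, 0, 1]

/-- `Pm * Mex`. -/
def Tm (a b : ℤ) : Matrix (Fin 4) (Fin 4) ℤ :=
  !![1, 1, 0, 0; 0, 1, 1, 0; 0, 0, 1, 1; 0, 0, 0, 1+4*a-4*b]

/-- The Smith normal form `diag (1,1,1,1+4a-4b)` of `Mex`. -/
def Dm (a b : ℤ) : Matrix (Fin 4) (Fin 4) ℤ :=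
  !![1, 0, 0, 0; 0, 1, 0, 0; 0, 0, 1, 0; 0, 0, 0, 1+4*a-4*b]

theorem det_fin_four' (A : Matrix (Fin 4) (Fin 4) ℤ) : A.det =
    A 0 0 * (A 1 1 * (A 2 2 * A 3 3 - A 2 3 * A 3 2) - A 1 2 * (A 2 1 * A 3 3 - A 2 3 * A 3 1) + A 1 3 * (A 2 1 * A 3 2 - A 2 2 * A 3 1))
  - A 0 1 * (A 1 0 * (A 2 2 * A 3 3 - A 2 3 * A 3 2) - A 1 2 * (A 2 0 * A 3 3 - A 2 3 * A 3 0) + A 1 3 * (A 2 0 * A 3 2 - A 2 2 * A 3 0))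
  + A 0 2 * (A 1 0 * (A 2 1 * A 3 3 - A 2 3 * A 3 1) - A 1 1 * (A 2 0 * A 3 3 - A 2 3 * A 3 0) + A 1 3 * (A 2 0 * A 3 1 - A 2 1 * A 3 0))
  - A 0 3 * (A 1 0 * (A 2 1 * A 3 2 - A 2 2 * A 3 1) - A 1 1 * (A 2 0 * A 3 2 - A 2 2 * A 3 0) + A 1 2 * (A 2 0 * A 3 1 - A 2 1 * A 3 0)) := by
  rw [Matrix.det_succ_row_zero]
  simp [Fin.sum_univ_succ, Matrix.det_fin_three, Fin.succAbove,
    show (Fin.succ 2 : Fin 4) = 3 from rfl, show (Fin.castSucc 2 : Fin 4) = 2 from rfl,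
    show (Fin.succ 1 : Fin 4) = 2 from rfl, show (Fin.castSucc 1 : Fin 4) = 1 from rfl,
    show (Fin.succ 0 : Fin 4) = 1 from rfl, show (Fin.castSucc 0 : Fin 4) = 0 from rfl]
  ring

theorem B_two_eq (a b : ℤ) : B a b 2 = 2 • Gamma a b - 1 := by
  unfold B; noncomm_ring

theorem B_two_eq_Mex (a b : ℤ) : B a b 2 = Mex a b := by
  rw [B_two_eq, two_smul]
  ext i j
  fin_cases i <;> fin_cases j <;>
    simp [Gamma, Mex, Matrix.one_apply, Matrix.vecHead, Matrix.vecTail] <;> ring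

theorem Pinv_Pm (a b : ℤ) : Pinv a b * Pm a b = 1 := by
  ext i j
  fin_cases i <;> fin_cases j <;>
    simp [Pinv, Pm, Matrix.mul_apply, Fin.sum_univ_four, Matrix.one_apply,
      Matrix.vecHead, Matrix.vecTail] <;> ring

theorem Pm_Pinv (a b : ℤ) : Pm a b * Pinv a b = 1 := by
  ext i j
  fin_cases i <;> fin_cases j <;>
    simp [Pinv, Pm, Matrix.mul_apply, Fin.sum_univ_four, Matrix.one_apply,
      Matrix.vecHead, Matrix.vecTail] <;> ring

theorem Pm_Mex (a b : ℤ) : Pm a b * Mex a b = Tm a b := by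
  ext i j
  fin_cases i <;> fin_cases j <;>
    simp [Pm, Mex, Tm, Matrix.mul_apply, Fin.sum_univ_four,
      Matrix.vecHead, Matrix.vecTail] <;> ring

theorem Tm_Qm (a b : ℤ) : Tm a b * Qm = Dm a b := by
  ext i j
  fin_cases i <;> fin_cases j <;>
    simp [Tm, Qm, Dm, Matrix.mul_apply, Fin.sum_univ_four,
      Matrix.vecHead, Matrix.vecTail] <;> ring

/-- The linear map `x ↦ (Pm x)₃ mod |1+4a-4b|`, whose kernel is the range of `Mex`. -/
noncomputable def phi (a b : ℤ) : (Fin 4 → ℤ) →ₗ[ℤ] ZMod (1 + 4*a - 4*b).natAbs :=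
  (Int.castAddHom (ZMod (1 + 4*a - 4*b).natAbs)).toIntLinearMap ∘ₗ
    (LinearMap.proj 3) ∘ₗ (Matrix.toLin' (Pm a b))

theorem phi_apply (a b : ℤ) (x : Fin 4 → ℤ) :
    phi a b x = (((Pm a b).mulVec x 3 : ℤ) : ZMod (1 + 4*a - 4*b).natAbs) := by
  simp [phi, Matrix.toLin'_apply]

theorem phi_surj (a b : ℤ) : Function.Surjective (phi a b) := by
  intro c
  obtain ⟨z, rfl⟩ := ZMod.intCast_surjective c
  refine ⟨(Pinv a b).mulVec ![0,0,0,z], ?_⟩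
  rw [phi_apply, Matrix.mulVec_mulVec, Pm_Pinv, Matrix.one_mulVec]
  simp

theorem Tm_mulVec (a b : ℤ) (v : Fin 4 → ℤ) :
    (Tm a b).mulVec v = ![v 0 + v 1, v 1 + v 2, v 2 + v 3, (1+4*a-4*b) * v 3] := by
  funext i
  fin_cases i <;>
    simp [Tm, Matrix.mulVec, dotProduct, Fin.sum_univ_four,
      Matrix.vecHead, Matrix.vecTail]

theorem Dm_mulVec (a b : ℤ) (v : Fin 4 → ℤ) :
    (Dm a b).mulVec v = ![v 0, v 1, v 2, (1+4*a-4*b) * v 3] := by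
  funext i
  fin_cases i <;>
    simp [Dm, Matrix.mulVec, dotProduct, Fin.sum_univ_four,
      Matrix.vecHead, Matrix.vecTail]

theorem ker_phi (a b : ℤ) :
    LinearMap.range (Matrix.toLin' (Mex a b)) = LinearMap.ker (phi a b) := by
  apply le_antisymm
  · rintro x ⟨v, rfl⟩
    rw [LinearMap.mem_ker, phi_apply, Matrix.toLin'_apply, Matrix.mulVec_mulVec, Pm_Mex,
      Tm_mulVec]
    have h0 : ((1 + 4*a - 4*b : ℤ) : ZMod (1 + 4*a - 4*b).natAbs) = 0 :=
      (ZMod.intCast_zmod_eq_zero_iff_dvd _ _).mpr (Int.natAbs_dvd.mpr dvd_rfl)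
    rw [show (![v 0 + v 1, v 1 + v 2, v 2 + v 3, (1+4*a-4*b) * v 3]) 3
      = (1+4*a-4*b) * v 3 from rfl, Int.cast_mul, h0, zero_mul]
  · intro x hx
    rw [LinearMap.mem_ker, phi_apply] at hx
    have hdvd : (1 + 4*a - 4*b : ℤ) ∣ (Pm a b).mulVec x 3 :=
      Int.natAbs_dvd.mp ((ZMod.intCast_zmod_eq_zero_iff_dvd _ _).mp hx)
    obtain ⟨k, hk⟩ := hdvd
    set y : Fin 4 → ℤ := ![(Pm a b).mulVec x 0, (Pm a b).mulVec x 1, (Pm a b).mulVec x 2, k]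
      with hy
    have hDy : (Dm a b).mulVec y = (Pm a b).mulVec x := by
      rw [Dm_mulVec]
      funext i
      fin_cases i <;> simp [hy] <;> omega
    refine ⟨Qm.mulVec y, ?_⟩
    rw [Matrix.toLin'_apply, Matrix.mulVec_mulVec]
    have step : (Pm a b).mulVec ((Mex a b * Qm).mulVec y) = (Pm a b).mulVec x := by
      rw [Matrix.mulVec_mulVec, ← Matrix.mul_assoc, Pm_Mex, Tm_Qm, hDy]
    calc (Mex a b * Qm).mulVec y
        = (1 : Matrix (Fin 4) (Fin 4) ℤ).mulVec ((Mex a b * Qm).mulVec y) := by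
          rw [Matrix.one_mulVec]
      _ = ((Pinv a b * Pm a b)).mulVec ((Mex a b * Qm).mulVec y) := by rw [Pinv_Pm]
      _ = (Pinv a b).mulVec ((Pm a b).mulVec ((Mex a b * Qm).mulVec y)) := by
          rw [← Matrix.mulVec_mulVec]
      _ = (Pinv a b).mulVec ((Pm a b).mulVec x) := by rw [step]
      _ = ((Pinv a b * Pm a b)).mulVec x := by rw [Matrix.mulVec_mulVec]
      _ = x := by rw [Pinv_Pm, Matrix.one_mulVec]

/-- A `Finset.gcd` of integers dividing `1` equals `1`. -/
theorem int_gcd_eq_one {β : Type*} {s : Finset β} {f : β → ℤ} (h : s.gcd f ∣ 1) :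
    s.gcd f = 1 := by
  have hn : 0 ≤ s.gcd f := Int.nonneg_of_normalize_eq_self Finset.normalize_gcd
  rcases Int.isUnit_iff.mp (isUnit_of_dvd_one h) with h1 | h1
  · exact h1
  · omega

set_option maxRecDepth 4000 in
/-- `B(2) = 2Γ − I`, `det B(2) = 1 + 4a − 4b` (in particular `B(2)` is
injective as a `ℤ`-linear map), the gcd of its entries, of its `2×2` minors and of its
`3×3` minors all equal `1`, and `coker B(2) ≅ ℤ_{1+4a−4b}` (with `ℤ_d` realized as
`ZMod d.natAbs`). -/
theorem B_two (a b : ℤ) :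
    B a b 2 = 2 • Gamma a b - 1 ∧
    (B a b 2).det = 1 + 4 * a - 4 * b ∧
    Function.Injective ⇑(Matrix.toLin' (B a b 2)) ∧
    (Finset.univ.gcd fun p : Fin 4 × Fin 4 => B a b 2 p.1 p.2) = 1 ∧
    ((Finset.univ.filter fun p : (Fin 2 → Fin 4) × (Fin 2 → Fin 4) =>
        Function.Injective p.1 ∧ Function.Injective p.2).gcd
      fun p => ((B a b 2).submatrix p.1 p.2).det) = 1 ∧
    ((Finset.univ.filter fun p : (Fin 3 → Fin 4) × (Fin 3 → Fin 4) =>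
        Function.Injective p.1 ∧ Function.Injective p.2).gcd
      fun p => ((B a b 2).submatrix p.1 p.2).det) = 1 ∧
    Nonempty
      (((Fin 4 → ℤ) ⧸ LinearMap.range (Matrix.toLin' (B a b 2)))
        ≃+ ZMod (1 + 4 * a - 4 * b).natAbs) := by
  have hB := B_two_eq_Mex a b
  have hdet : (B a b 2).det = 1 + 4 * a - 4 * b := by
    rw [hB, det_fin_four']
    simp [Mex, Matrix.vecHead, Matrix.vecTail]; ring
  have hd0 : (1 : ℤ) + 4 * a - 4 * b ≠ 0 := by omega
  refine ⟨B_two_eq a b, hdet, ?_, ?_, ?_, ?_, ?_⟩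
  · -- injectivity
    intro x y hxy
    have h0 : (B a b 2).mulVec (x - y) = 0 := by
      rw [Matrix.mulVec_sub, sub_eq_zero]
      simpa [Matrix.toLin'_apply] using hxy
    have hz : x - y = 0 :=
      Matrix.eq_zero_of_mulVec_eq_zero (by rw [hdet]; exact hd0) h0
    exact sub_eq_zero.mp hz
  · -- gcd of entries
    rw [hB]
    have h1 : (Finset.univ.gcd fun p : Fin 4 × Fin 4 => Mex a b p.1 p.2) ∣ Mex a b 0 0 :=
      Finset.gcd_dvd (Finset.mem_univ ((0 : Fin 4), (0 : Fin 4)))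
    have h2 : (Finset.univ.gcd fun p : Fin 4 × Fin 4 => Mex a b p.1 p.2) ∣ Mex a b 1 0 :=
      Finset.gcd_dvd (Finset.mem_univ ((1 : Fin 4), (0 : Fin 4)))
    rw [show Mex a b 0 0 = 2*a-1 by simp [Mex]] at h1
    rw [show Mex a b 1 0 = 2*a by simp [Mex]] at h2
    refine int_gcd_eq_one ?_
    have h3 := dvd_sub h2 h1
    rwa [show 2*a - (2*a-1) = 1 by ring] at h3
  · -- gcd of 2×2 minors
    rw [hB]
    have hi1 : Function.Injective (![0,1] : Fin 2 → Fin 4) := by decide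
    have hi2 : Function.Injective (![0,2] : Fin 2 → Fin 4) := by decide
    have hi3 : Function.Injective (![0,3] : Fin 2 → Fin 4) := by decide
    have m1 : ((![0,1], ![0,1]) : (Fin 2 → Fin 4) × (Fin 2 → Fin 4)) ∈
        (Finset.univ.filter fun p : (Fin 2 → Fin 4) × (Fin 2 → Fin 4) =>
          Function.Injective p.1 ∧ Function.Injective p.2) :=
      Finset.mem_filter.mpr ⟨Finset.mem_univ _, hi1, hi1⟩
    have m2 : ((![0,1], ![0,3]) : (Fin 2 → Fin 4) × (Fin 2 → Fin 4)) ∈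
        (Finset.univ.filter fun p : (Fin 2 → Fin 4) × (Fin 2 → Fin 4) =>
          Function.Injective p.1 ∧ Function.Injective p.2) :=
      Finset.mem_filter.mpr ⟨Finset.mem_univ _, hi1, hi3⟩
    have m3 : ((![0,1], ![0,2]) : (Fin 2 → Fin 4) × (Fin 2 → Fin 4)) ∈
        (Finset.univ.filter fun p : (Fin 2 → Fin 4) × (Fin 2 → Fin 4) =>
          Function.Injective p.1 ∧ Function.Injective p.2) :=
      Finset.mem_filter.mpr ⟨Finset.mem_univ _, hi1, hi2⟩
    have h1 := Finset.gcd_dvd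
      (f := fun p : (Fin 2 → Fin 4) × (Fin 2 → Fin 4) => ((Mex a b).submatrix p.1 p.2).det) m1
    have h2 := Finset.gcd_dvd
      (f := fun p : (Fin 2 → Fin 4) × (Fin 2 → Fin 4) => ((Mex a b).submatrix p.1 p.2).det) m2
    have h3 := Finset.gcd_dvd
      (f := fun p : (Fin 2 → Fin 4) × (Fin 2 → Fin 4) => ((Mex a b).submatrix p.1 p.2).det) m3
    simp only at h1 h2 h3
    rw [show ((Mex a b).submatrix ![0,1] ![0,1]).det = 2*a-2*b+1 by
      rw [Matrix.det_fin_two]; simp [Mex, Matrix.det_fin_two, Matrix.vecHead, Matrix.vecTail]; ring] at h1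
    rw [show ((Mex a b).submatrix ![0,1] ![0,3]).det = 2*a by
      rw [Matrix.det_fin_two]; simp [Mex, Matrix.det_fin_two, Matrix.vecHead, Matrix.vecTail]; ring] at h2
    rw [show ((Mex a b).submatrix ![0,1] ![0,2]).det = 2*b by
      rw [Matrix.det_fin_two]; simp [Mex, Matrix.det_fin_two, Matrix.vecHead, Matrix.vecTail]; ring] at h3
    refine int_gcd_eq_one ?_
    have h4 := dvd_add (dvd_sub h1 h2) h3
    rwa [show 2*a-2*b+1 - 2*a + 2*b = 1 by ring] at h4
  · -- gcd of 3×3 minors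
    rw [hB]
    have hi1 : Function.Injective (![0,1,2] : Fin 3 → Fin 4) := by decide
    have hi2 : Function.Injective (![0,1,3] : Fin 3 → Fin 4) := by decide
    have m1 : ((![0,1,2], ![0,1,2]) : (Fin 3 → Fin 4) × (Fin 3 → Fin 4)) ∈
        (Finset.univ.filter fun p : (Fin 3 → Fin 4) × (Fin 3 → Fin 4) =>
          Function.Injective p.1 ∧ Function.Injective p.2) :=
      Finset.mem_filter.mpr ⟨Finset.mem_univ _, hi1, hi1⟩
    have m2 : ((![0,1,2], ![0,1,3]) : (Fin 3 → Fin 4) × (Fin 3 → Fin 4)) ∈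
        (Finset.univ.filter fun p : (Fin 3 → Fin 4) × (Fin 3 → Fin 4) =>
          Function.Injective p.1 ∧ Function.Injective p.2) :=
      Finset.mem_filter.mpr ⟨Finset.mem_univ _, hi1, hi2⟩
    have m3 : ((![0,1,3], ![0,1,3]) : (Fin 3 → Fin 4) × (Fin 3 → Fin 4)) ∈
        (Finset.univ.filter fun p : (Fin 3 → Fin 4) × (Fin 3 → Fin 4) =>
          Function.Injective p.1 ∧ Function.Injective p.2) :=
      Finset.mem_filter.mpr ⟨Finset.mem_univ _, hi2, hi2⟩
    have h1 := Finset.gcd_dvd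
      (f := fun p : (Fin 3 → Fin 4) × (Fin 3 → Fin 4) => ((Mex a b).submatrix p.1 p.2).det) m1
    have h2 := Finset.gcd_dvd
      (f := fun p : (Fin 3 → Fin 4) × (Fin 3 → Fin 4) => ((Mex a b).submatrix p.1 p.2).det) m2
    have h3 := Finset.gcd_dvd
      (f := fun p : (Fin 3 → Fin 4) × (Fin 3 → Fin 4) => ((Mex a b).submatrix p.1 p.2).det) m3
    simp only at h1 h2 h3
    rw [show ((Mex a b).submatrix ![0,1,2] ![0,1,2]).det = 1+2*a-4*b by
      rw [Matrix.det_fin_three]; simp [Mex, Matrix.det_fin_three, Matrix.vecHead, Matrix.vecTail]; ring] at h1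
    rw [show ((Mex a b).submatrix ![0,1,2] ![0,1,3]).det = -(2*a) by
      rw [Matrix.det_fin_three]; simp [Mex, Matrix.det_fin_three, Matrix.vecHead, Matrix.vecTail]; ring] at h2
    rw [show ((Mex a b).submatrix ![0,1,3] ![0,1,3]).det = 1-2*b by
      rw [Matrix.det_fin_three]; simp [Mex, Matrix.det_fin_three, Matrix.vecHead, Matrix.vecTail]; ring] at h3
    refine int_gcd_eq_one ?_
    -- g ∣ (1+2a-4b) + (-(2a)) = 1-4b and g ∣ 2*(1-2b) = 2-4b, so g ∣ 1
    have h4 := dvd_sub (h3.mul_left 2) (dvd_add h1 h2)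
    rwa [show 2*(1-2*b) - (1+2*a-4*b + -(2*a)) = 1 by ring] at h4
  · -- cokernel
    rw [hB]
    exact ⟨((Submodule.quotEquivOfEq _ _ (ker_phi a b)).trans
      ((phi a b).quotKerEquivOfSurjective (phi_surj a b))).toAddEquiv⟩
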